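/- Let G be a finite simple connected graph of order n ≥ 3 that is not isomorphic to a cycle Cₙ for any n, and suppose the distinguishing number of G satisfies D(G) ≥ 3. Then the distinguishing chromatic number of the subdivision graph of G satisfies χ_D(S(G)) ≤ D(G). -/
import Mathlib


open SimpleGraph

/-- The middle graph `M(G)`: vertices are `V(G) ⊕ E(G)`; two edges are adjacent
iff they are distinct and share an endpoint; a vertex and an edge are adjacent
iff the vertex is incident to the edge. -/
def middleGraph {V : Type*} (G : SimpleGraph V) : SimpleGraph (V ⊕ G.edgeSet) :=
  SimpleGraph.fromRel fun x y =>
    match x, y with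
    | Sum.inr e, Sum.inr f => e ≠ f ∧ ∃ v, v ∈ (e : Sym2 V) ∧ v ∈ (f : Sym2 V)
    | Sum.inl v, Sum.inr e => v ∈ (e : Sym2 V)
    | _, _ => False

/-- The subdivision graph `S(G)`: vertices are `V(G) ⊕ E(G)`; `v ∈ V(G)` and
`e ∈ E(G)` are adjacent iff `v` is incident to `e`. -/
def subdivisionGraph {V : Type*} (G : SimpleGraph V) : SimpleGraph (V ⊕ G.edgeSet) :=
  SimpleGraph.fromRel fun x y =>
    match x, y with
    | Sum.inl v, Sum.inr e => v ∈ (e : Sym2 V)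
    | _, _ => False

/-- The endline graph `G⁺`: to each vertex `v` of `G` (coded `Sum.inl v`) we attach a new
pendant vertex (coded `Sum.inr v`) via a new (endline) edge. -/
def endlineGraph {V : Type*} (G : SimpleGraph V) : SimpleGraph (V ⊕ V) :=
  SimpleGraph.fromRel fun x y =>
    match x, y with
    | Sum.inl u, Sum.inl v => G.Adj u v
    | Sum.inl v, Sum.inr u => v = u
    | _, _ => False

/-- A vertex coloring is distinguishing if the only automorphism preserving it is the identity. -/
def IsDistinguishingVertexColoring {V α : Type*} (G : SimpleGraph V) (c : V → α) : Prop :=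
  ∀ φ : G ≃g G, (∀ v, c (φ v) = c v) → ∀ v, φ v = v

/-- A proper vertex coloring assigns different colors to adjacent vertices. -/
def IsProperVertexColoring {V α : Type*} (G : SimpleGraph V) (c : V → α) : Prop :=
  ∀ u v, G.Adj u v → c u ≠ c v

/-- The distinguishing number `D(G)`. -/
noncomputable def distinguishingNumber {V : Type*} (G : SimpleGraph V) : ℕ :=
  sInf {r | ∃ c : V → Fin r, IsDistinguishingVertexColoring G c}

/-- The distinguishing chromatic number `χ_D(G)`. -/
noncomputable def distinguishingChromaticNumber {V : Type*} (G : SimpleGraph V) : ℕ :=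
  sInf {r | ∃ c : V → Fin r,
    IsProperVertexColoring G c ∧ IsDistinguishingVertexColoring G c}

/-- An edge coloring is distinguishing if the only automorphism preserving it is the identity. -/
def IsDistinguishingEdgeColoring {V α : Type*} (G : SimpleGraph V) (c : G.edgeSet → α) : Prop :=
  ∀ φ : G ≃g G, (∀ e, c (φ.mapEdgeSet e) = c e) → ∀ v, φ v = v

/-- A proper edge coloring assigns different colors to distinct edges sharing an endpoint. -/
def IsProperEdgeColoring {V α : Type*} (G : SimpleGraph V) (c : G.edgeSet → α) : Prop :=
  ∀ e f : G.edgeSet, e ≠ f → (∃ v, v ∈ (e : Sym2 V) ∧ v ∈ (f : Sym2 V)) → c e ≠ c f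

/-- The distinguishing index `D'(G)`. -/
noncomputable def distinguishingIndex {V : Type*} (G : SimpleGraph V) : ℕ :=
  sInf {r | ∃ c : G.edgeSet → Fin r, IsDistinguishingEdgeColoring G c}

/-- The distinguishing chromatic index `χ'_D(G)`. -/
noncomputable def distinguishingChromaticIndex {V : Type*} (G : SimpleGraph V) : ℕ :=
  sInf {r | ∃ c : G.edgeSet → Fin r,
    IsProperEdgeColoring G c ∧ IsDistinguishingEdgeColoring G c}

/-- The total distinguishing number `D''(G)`: the least `d` such that there is a (not
necessarily proper) coloring of vertices and edges with `d` colors preserved only by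
the identity automorphism. -/
noncomputable def totalDistinguishingNumber {V : Type*} (G : SimpleGraph V) : ℕ :=
  sInf {d | ∃ (cV : V → Fin d) (cE : G.edgeSet → Fin d),
    ∀ φ : G ≃g G,
      ((∀ v, cV (φ v) = cV v) ∧ (∀ e, cE (φ.mapEdgeSet e) = cE e)) → ∀ v, φ v = v}


section CycleClassification

variable {V : Type*} (G : SimpleGraph V)

open Classical in
/-- The neighbor of `v` other than `u` (in a 2-regular graph), with default `d`. -/
noncomputable def cycOther (d u v : V) : V :=
  if h : ∃ w, G.Adj v w ∧ w ≠ u then h.choose else d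

lemma cycOther_exists [Fintype V] [DecidableEq V] [DecidableRel G.Adj]
    (hreg : ∀ v, G.degree v = 2) {u v : V} (h : G.Adj u v) :
    ∃ w, G.Adj v w ∧ w ≠ u := by
  have hu : u ∈ G.neighborFinset v := by simpa using h.symm
  have hc : ((G.neighborFinset v).erase u).card = 1 := by
    rw [Finset.card_erase_of_mem hu, G.card_neighborFinset_eq_degree, hreg]
  obtain ⟨w, hw⟩ := Finset.card_eq_one.mp hc
  refine ⟨w, ?_, ?_⟩
  · have : w ∈ (G.neighborFinset v).erase u := by simp [hw]
    simpa using (Finset.mem_erase.mp this).2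
  · have : w ∈ (G.neighborFinset v).erase u := by simp [hw]
    exact (Finset.mem_erase.mp this).1

lemma cycOther_spec [Fintype V] [DecidableEq V] [DecidableRel G.Adj]
    (hreg : ∀ v, G.degree v = 2) (d : V) {u v : V} (h : G.Adj u v) :
    G.Adj v (cycOther G d u v) ∧ cycOther G d u v ≠ u := by
  rw [cycOther, dif_pos (cycOther_exists G hreg h)]
  exact (cycOther_exists G hreg h).choose_spec

lemma cycOther_unique [Fintype V] [DecidableEq V] [DecidableRel G.Adj]
    (hreg : ∀ v, G.degree v = 2) (d : V) {u v w : V} (h : G.Adj u v)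
    (hw : G.Adj v w) (hwu : w ≠ u) : w = cycOther G d u v := by
  have hu : u ∈ G.neighborFinset v := by simpa using h.symm
  have hc : ((G.neighborFinset v).erase u).card = 1 := by
    rw [Finset.card_erase_of_mem hu, G.card_neighborFinset_eq_degree, hreg]
  obtain ⟨x, hx⟩ := Finset.card_eq_one.mp hc
  have h1 : w ∈ (G.neighborFinset v).erase u := by
    rw [Finset.mem_erase]; exact ⟨hwu, by simpa using hw⟩
  have h2 : cycOther G d u v ∈ (G.neighborFinset v).erase u := by
    obtain ⟨ha, hb⟩ := cycOther_spec G hreg d h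
    rw [Finset.mem_erase]; exact ⟨hb, by simpa using ha⟩
  rw [hx, Finset.mem_singleton] at h1 h2
  rw [h1, h2]

lemma twoRegular_iso_cycle {V : Type*} [Fintype V] [DecidableEq V] (G : SimpleGraph V)
    [DecidableRel G.Adj]
    (hconn : G.Connected) (hcard : 3 ≤ Fintype.card V)
    (hreg : ∀ v, G.degree v = 2) :
    Nonempty (G ≃g cycleGraph (Fintype.card V)) := by
  have hV : Nonempty V := Fintype.card_pos_iff.mp (by omega)
  obtain ⟨v0⟩ := hV
  have hd0 : 0 < G.degree v0 := by rw [hreg]; omega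
  obtain ⟨v1, hv1⟩ : ∃ w, G.Adj v0 w := by
    obtain ⟨w, hw⟩ := Finset.card_pos.mp (by rw [G.card_neighborFinset_eq_degree]; exact hd0)
    exact ⟨w, by simpa using hw⟩
  -- the walk sequence
  set O : V → V → V := cycOther G v0 with hO
  let g : ℕ → V × V := fun k => Nat.rec (v0, v1) (fun _ p => (p.2, O p.1 p.2)) k
  set f : ℕ → V := fun k => (g k).1 with hf
  have hf1 : ∀ k, f (k + 1) = (g k).2 := fun k => rfl
  have hstep : ∀ k, f (k + 2) = O (f k) (f (k + 1)) := fun k => rfl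
  have hAdj : ∀ k, G.Adj (f k) (f (k + 1)) := by
    intro k
    induction k with
    | zero => exact hv1
    | succ n ih =>
      rw [hstep n]
      exact (cycOther_spec G hreg v0 ih).1
  have hne2 : ∀ k, f (k + 2) ≠ f k := by
    intro k
    rw [hstep k]
    exact (cycOther_spec G hreg v0 (hAdj k)).2
  have hback : ∀ k, f k = O (f (k + 2)) (f (k + 1)) := by
    intro k
    exact cycOther_unique G hreg v0 (hAdj (k+1)).symm (hAdj k).symm (fun h => hne2 k h.symm)
  -- unique-neighbor lemma
  have hnbr : ∀ k w, G.Adj (f (k + 1)) w → w = f k ∨ w = f (k + 2) := by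
    intro k w hw
    by_cases h : w = f k
    · exact Or.inl h
    · right
      rw [hstep k]
      exact cycOther_unique G hreg v0 (hAdj k) hw h
  -- forward and backward determinism of states
  have hfwd : ∀ i j, f i = f j → f (i+1) = f (j+1) → ∀ m, f (i+m) = f (j+m) := by
    intro i j h0 h1 m
    induction m using Nat.strong_induction_on with
    | _ m ih =>
      match m with
      | 0 => exact h0
      | 1 => exact h1
      | (m+2) =>
        have e1 := ih m (by omega)
        have e2' : f (i+m+1) = f (j+m+1) := by
          rw [show i+m+1 = i+(m+1) by omega, show j+m+1 = j+(m+1) by omega]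
          exact ih (m+1) (by omega)
        rw [show i+(m+2) = (i+m)+2 by omega, show j+(m+2) = (j+m)+2 by omega,
          hstep (i+m), hstep (j+m), e1, e2']
  have hbwd : ∀ i j t, f (i+t) = f (j+t) → f (i+t+1) = f (j+t+1) → f i = f j ∧ f (i+1) = f (j+1) := by
    intro i j t
    induction t with
    | zero => exact fun h0 h1 => ⟨h0, h1⟩
    | succ n ih =>
      intro h0 h1
      apply ih
      · rw [hback (i+n), hback (j+n)]
        rw [show i+n+2 = i+(n+1)+1 by omega, show j+n+2 = j+(n+1)+1 by omega,
          show i+n+1 = i+(n+1) by omega, show j+n+1 = j+(n+1) by omega, h0, h1]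
      · rw [show i+n+1 = i+(n+1) by omega, show j+n+1 = j+(n+1) by omega]
        exact h0
  -- existence of a positive period
  have hex : ∃ p, 0 < p ∧ f p = f 0 ∧ f (p+1) = f 1 := by
    obtain ⟨i, j, hne, heq⟩ := Finite.exists_ne_map_eq_of_infinite
      (fun k : ℕ => (f k, f (k+1)))
    simp only [Prod.mk.injEq] at heq
    rcases Nat.lt_or_ge i j with h | h
    · have h0 : f (0 + i) = f (j - i + i) := by
        rw [Nat.zero_add, show j - i + i = j by omega]; exact heq.1
      have h1 : f (0 + i + 1) = f (j - i + i + 1) := by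
        rw [Nat.zero_add, show j - i + i = j by omega]; exact heq.2
      obtain ⟨ha, hb⟩ := hbwd 0 (j - i) i h0 h1
      exact ⟨j - i, by omega, ha.symm, hb.symm⟩
    · have hlt : j < i := by omega
      have h0 : f (0 + j) = f (i - j + j) := by
        rw [Nat.zero_add, show i - j + j = i by omega]; exact heq.1.symm
      have h1 : f (0 + j + 1) = f (i - j + j + 1) := by
        rw [Nat.zero_add, show i - j + j = i by omega]; exact heq.2.symm
      obtain ⟨ha, hb⟩ := hbwd 0 (i - j) j h0 h1
      exact ⟨i - j, by omega, ha.symm, hb.symm⟩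
  set p := Nat.find hex with hpdef
  obtain ⟨hppos, hfp, hfp1⟩ := Nat.find_spec hex
  have hmin : ∀ q, 0 < q → q < p → ¬(f q = f 0 ∧ f (q+1) = f 1) := by
    intro q hq hqp hcon
    exact Nat.find_min hex hqp ⟨hq, hcon.1, hcon.2⟩
  -- periodicity
  have hper : ∀ k, f (k + p) = f k := by
    intro k
    have := hfwd p 0 hfp hfp1 k
    simpa [Nat.add_comm] using this
  have hperm : ∀ k, f k = f (k % p) := by
    intro k
    conv_lhs => rw [show k = k % p + (k / p) * p from by rw [Nat.mod_add_div']]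
    generalize k / p = t
    induction t with
    | zero => simp
    | succ n ih =>
      rw [show k % p + (n+1) * p = (k % p + n * p) + p by ring, hper]
      exact ih
  -- no reversal
  have hnorev : ∀ D k N, N - k = D → k ≤ N → ¬(f N = f (k+1) ∧ f (N+1) = f k) := by
    intro D
    induction D using Nat.strong_induction_on with
    | _ D ih =>
      intro k N hD hkN ⟨h1, h2⟩
      match D, hD with
      | 0, hD =>
        have : N = k := by omega
        subst this
        exact (hAdj N).ne (by rw [h1])
      | 1, hD =>
        have : N = k + 1 := by omega
        subst this
        exact hne2 k (by rw [← h2])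
      | (D+2), hD =>
        have hN : k + 2 ≤ N := by omega
        apply ih D (by omega) (k+1) (N-1) (by omega) (by omega)
        constructor
        · -- f (N-1) = f (k+2)
          have := hback (N-1)
          rw [show N-1+2 = N+1 by omega, show N-1+1 = N by omega] at this
          rw [this, h1, h2, ← hstep k]
        · rw [show N-1+1 = N by omega, h1]
  have hnorev' : ∀ k N, ¬(f N = f (k+1) ∧ f (N+1) = f k) := by
    intro k N h
    rcases Nat.lt_or_ge N k with hlt | hge
    · exact hnorev (k - N) N k rfl (by omega) ⟨h.2.symm, h.1.symm⟩
    · exact hnorev (N - k) k N rfl hge h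
  -- injectivity core
  have hcore : ∀ i j, 1 ≤ i → i < j → j - i < p → f i ≠ f j := by
    intro i j hi hij hjp heq
    obtain ⟨i', rfl⟩ : ∃ i', i = i' + 1 := ⟨i - 1, by omega⟩
    have hj1 : G.Adj (f (i'+1)) (f (j+1)) := by rw [heq]; exact hAdj j
    rcases hnbr i' (f (j+1)) hj1 with h | h
    · -- reversal
      exact hnorev' i' j ⟨heq.symm, h⟩
    · -- period smaller than p
      have h0 : f (0 + (i'+1)) = f (j - (i'+1) + (i'+1)) := by
        rw [Nat.zero_add, show j - (i'+1) + (i'+1) = j by omega]; exact heq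
      have h1 : f (0 + (i'+1) + 1) = f (j - (i'+1) + (i'+1) + 1) := by
        rw [Nat.zero_add, show j - (i'+1) + (i'+1) = j by omega]
        exact h.symm
      obtain ⟨ha, hb⟩ := hbwd 0 (j - (i'+1)) (i'+1) h0 h1
      exact hmin (j - (i'+1)) (by omega) (by omega) ⟨ha.symm, hb.symm⟩
  have hinj : ∀ i j, i < p → j < p → f i = f j → i = j := by
    intro i j hip hjp heq
    by_contra hne
    rcases Nat.lt_or_ge i j with h | h
    · rcases Nat.eq_zero_or_pos i with rfl | hi
      · -- shift
        have : f p = f (j + p) := by rw [hper j, hfp]; exact heq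
        exact hcore p (j+p) (by omega) (by omega) (by omega) this
      · exact hcore i j hi h (by omega) heq
    · have hlt : j < i := by omega
      rcases Nat.eq_zero_or_pos j with rfl | hj
      · have : f p = f (i + p) := by rw [hper i, hfp]; exact heq.symm
        exact hcore p (i+p) (by omega) (by omega) (by omega) this
      · exact hcore j i hj hlt (by omega) heq.symm
  -- surjectivity
  have hclosed : ∀ k w, G.Adj (f k) w → ∃ m, w = f m := by
    intro k w hw
    have : G.Adj (f (k + p)) w := by rw [hper]; exact hw
    have hk1 : ∃ k', k + p = k' + 1 := ⟨k + p - 1, by omega⟩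
    obtain ⟨k', hk'⟩ := hk1
    rw [hk'] at this
    rcases hnbr k' w this with h | h
    · exact ⟨k', h⟩
    · exact ⟨k' + 2, h⟩
  have hsurj : ∀ w, ∃ m, w = f m := by
    intro w
    have hr : G.Reachable (f 0) w := hconn.preconnected v0 w
    obtain ⟨q⟩ := hr
    clear hfp1 hfp
    have : ∀ (u w : V) (q : G.Walk u w), (∃ m, u = f m) → ∃ m, w = f m := by
      intro u w q
      induction q with
      | nil => exact id
      | cons h' q ih =>
        rintro ⟨m, rfl⟩
        exact ih (hclosed m _ h')
    exact this _ _ q ⟨0, rfl⟩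
  -- card V = p
  have hcardp : Fintype.card V = p := by
    have hFbij : Function.Bijective (fun a : Fin p => f a.val) := by
      constructor
      · intro a b hab
        exact Fin.ext (hinj a.val b.val a.isLt b.isLt hab)
      · intro w
        obtain ⟨m, hm⟩ := hsurj w
        exact ⟨⟨m % p, Nat.mod_lt _ hppos⟩, by rw [hm, hperm m]⟩
    have := Fintype.card_of_bijective hFbij
    rw [Fintype.card_fin] at this
    omega
  have hp3 : 3 ≤ p := by omega
  -- build the iso
  have hpp : (p + 1) % p = 1 := by
    rw [Nat.add_mod_left, Nat.mod_eq_of_lt (by omega)]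
  have hadj_iff : ∀ a b : Fin p, (cycleGraph p).Adj a b ↔ G.Adj (f a.val) (f b.val) := by
    intro a b
    have ha := a.isLt; have hb := b.isLt
    rw [cycleGraph_adj']
    constructor
    · rintro (h | h)
      · -- (a - b).val = 1, so a = b + 1 (mod p)
        rw [Fin.sub_def] at h
        simp only at h
        have hab : a.val = (b.val + 1) % p := by
          rcases Nat.lt_or_ge (p - b.val + a.val) p with hd | hd
          · rw [Nat.mod_eq_of_lt hd] at h
            -- p - b + a = 1 forces a = 0, b = p - 1
            have h1 : b.val + 1 = p := by omega
            rw [h1, Nat.mod_self]; omega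
          · rw [Nat.mod_eq_sub_mod hd, Nat.mod_eq_of_lt (by omega)] at h
            rw [Nat.mod_eq_of_lt (by omega)]; omega
        rw [hab]
        rcases Nat.lt_or_ge (b.val + 1) p with hc | hc
        · rw [Nat.mod_eq_of_lt hc]; exact (hAdj b.val).symm
        · have hb1 : b.val = p - 1 := by omega
          rw [hb1, show (p - 1 + 1) % p = 0 by
            rw [Nat.sub_add_cancel (by omega), Nat.mod_self]]
          have := hAdj (p-1)
          rw [show p - 1 + 1 = p by omega, hfp] at this
          exact this.symm
      · rw [Fin.sub_def] at h
        simp only at h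
        have hab : b.val = (a.val + 1) % p := by
          rcases Nat.lt_or_ge (p - a.val + b.val) p with hd | hd
          · rw [Nat.mod_eq_of_lt hd] at h
            have h1 : a.val + 1 = p := by omega
            rw [h1, Nat.mod_self]; omega
          · rw [Nat.mod_eq_sub_mod hd, Nat.mod_eq_of_lt (by omega)] at h
            rw [Nat.mod_eq_of_lt (by omega)]; omega
        rw [hab]
        rcases Nat.lt_or_ge (a.val + 1) p with hc | hc
        · rw [Nat.mod_eq_of_lt hc]; exact hAdj a.val
        · have ha1 : a.val = p - 1 := by omega
          rw [ha1, show (p - 1 + 1) % p = 0 by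
            rw [Nat.sub_add_cancel (by omega), Nat.mod_self]]
          have := hAdj (p-1)
          rw [show p - 1 + 1 = p by omega, hfp] at this
          exact this
    · intro h
      have hap : G.Adj (f (a.val + p)) (f b.val) := by rw [hper]; exact h
      obtain ⟨k', hk'⟩ : ∃ k', a.val + p = k' + 1 := ⟨a.val + p - 1, by omega⟩
      rw [hk'] at hap
      rcases hnbr k' (f b.val) hap with hh | hh
      · -- b = a - 1
        have hbk : b.val = k' % p := by
          apply hinj _ _ b.isLt (Nat.mod_lt _ hppos)
          rw [← hperm k']; exact hh
        left
        rw [Fin.sub_def]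
        simp only
        rcases Nat.eq_zero_or_pos a.val with haz | hap'
        · have hk : k' = p - 1 := by omega
          have hbv : b.val = p - 1 := by
            rw [hbk, hk, Nat.mod_eq_of_lt (by omega)]
          rw [haz, hbv, show p - (p-1) + 0 = 1 by omega, Nat.mod_eq_of_lt (by omega)]
        · have hk : k' = a.val - 1 + p := by omega
          have hbv : b.val = a.val - 1 := by
            rw [hbk, hk, Nat.add_mod_right, Nat.mod_eq_of_lt (by omega)]
          rw [hbv, show p - (a.val - 1) + a.val = p + 1 by omega, hpp]
      · -- b = a + 1
        have hbk : b.val = (k' + 2) % p := by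
          apply hinj _ _ b.isLt (Nat.mod_lt _ hppos)
          rw [← hperm (k'+2)]; exact hh
        right
        rw [Fin.sub_def]
        simp only
        have hk2 : k' + 2 = a.val + 1 + p := by omega
        have hbv : b.val = (a.val + 1) % p := by rw [hbk, hk2, Nat.add_mod_right]
        rcases Nat.lt_or_ge (a.val + 1) p with hc | hc
        · rw [Nat.mod_eq_of_lt hc] at hbv
          rw [hbv, show p - a.val + (a.val + 1) = p + 1 by omega, hpp]
        · have ha1 : a.val = p - 1 := by omega
          have hbv0 : b.val = 0 := by
            rw [hbv, ha1, Nat.sub_add_cancel (by omega), Nat.mod_self]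
          rw [hbv0, ha1, show p - (p - 1) + 0 = 1 by omega, Nat.mod_eq_of_lt (by omega)]
  refine ⟨?_⟩
  rw [hcardp]
  set e : Fin p ≃ V := Equiv.ofBijective (fun a : Fin p => f a.val) (by
    constructor
    · intro a b hab
      exact Fin.ext (hinj a.val b.val a.isLt b.isLt hab)
    · intro w
      obtain ⟨m, hm⟩ := hsurj w
      exact ⟨⟨m % p, Nat.mod_lt _ hppos⟩, by rw [hm, hperm m]⟩) with he
  have key : ∀ a b : Fin p, G.Adj (e a) (e b) ↔ (cycleGraph p).Adj a b := by
    intro a b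
    rw [he]
    exact (hadj_iff a b).symm
  exact ((⟨e, fun {a b} => key a b⟩ : cycleGraph p ≃g G)).symm

end CycleClassification

section MainAux

open SimpleGraph

variable {V : Type*} (G : SimpleGraph V)

lemma sub_adj_inl_inr (v : V) (e : G.edgeSet) :
    (subdivisionGraph G).Adj (Sum.inl v) (Sum.inr e) ↔ v ∈ (e : Sym2 V) := by
  simp [subdivisionGraph, SimpleGraph.fromRel_adj]

lemma sub_adj_inr_inl (v : V) (e : G.edgeSet) :
    (subdivisionGraph G).Adj (Sum.inr e) (Sum.inl v) ↔ v ∈ (e : Sym2 V) := by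
  rw [SimpleGraph.adj_comm]; exact sub_adj_inl_inr G v e

lemma sub_not_adj_inl_inl (u v : V) :
    ¬ (subdivisionGraph G).Adj (Sum.inl u) (Sum.inl v) := by
  simp [subdivisionGraph, SimpleGraph.fromRel_adj]

lemma sub_not_adj_inr_inr (e f : G.edgeSet) :
    ¬ (subdivisionGraph G).Adj (Sum.inr e) (Sum.inr f) := by
  simp [subdivisionGraph, SimpleGraph.fromRel_adj]

lemma sub_adj_isLeft {x y : V ⊕ G.edgeSet} (h : (subdivisionGraph G).Adj x y) :
    x.isLeft = !y.isLeft := by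
  cases x with
  | inl v =>
    cases y with
    | inl w => exact absurd h (sub_not_adj_inl_inl G v w)
    | inr e => simp
  | inr e =>
    cases y with
    | inl w => simp
    | inr f => exact absurd h (sub_not_adj_inr_inr G e f)

end MainAux


/-- If `G` is a finite simple connected graph of order `≥ 3`, not
isomorphic to any cycle, with `D(G) ≥ 3`, then `χ_D(S(G)) ≤ D(G)`. -/
theorem chromaticDistinguishing_subdivision_le_distinguishingNumber
    {V : Type*} [Fintype V] (G : SimpleGraph V)
    (hconn : G.Connected) (hcard : 3 ≤ Fintype.card V)
    (hcyc : ∀ m : ℕ, IsEmpty (G ≃g cycleGraph m))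
    (hD : 3 ≤ distinguishingNumber G) :
    distinguishingChromaticNumber (subdivisionGraph G) ≤ distinguishingNumber G := by
  classical
  set d := distinguishingNumber G with hd'
  -- a distinguishing coloring with d colors
  have hne : {r | ∃ c : V → Fin r, IsDistinguishingVertexColoring G c}.Nonempty := by
    refine ⟨Fintype.card V, Fintype.equivFin V, ?_⟩
    intro φ hφ v
    exact (Fintype.equivFin V).injective (hφ v)
  obtain ⟨c, hc⟩ : ∃ c : V → Fin d, IsDistinguishingVertexColoring G c := Nat.sInf_mem hne
  -- a vertex of degree ≠ 2
  have hdeg : ∃ w : V, G.degree w ≠ 2 := by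
    by_contra hall
    push_neg at hall
    obtain ⟨iso⟩ := twoRegular_iso_cycle G hconn hcard hall
    exact (hcyc (Fintype.card V)).false iso
  obtain ⟨w₀, hw₀⟩ := hdeg
  -- endpoints of an edge
  have hend : ∀ e : G.edgeSet, ∃ u v : V, (e : Sym2 V) = s(u, v) ∧ G.Adj u v := by
    rintro ⟨e, he⟩
    induction e with
    | _ u v => exact ⟨u, v, rfl, (G.mem_edgeSet).mp he⟩
  -- choose edge colors avoiding endpoint colors
  have hec : ∀ e : G.edgeSet, ∃ x : Fin d, ∀ z, z ∈ (e : Sym2 V) → c z ≠ x := by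
    intro e
    obtain ⟨u, v, hs, _⟩ := hend e
    by_contra hno
    push_neg at hno
    have hsub : ∀ x : Fin d, x = c u ∨ x = c v := by
      intro x
      obtain ⟨z, hz, hcz⟩ := hno x
      rw [hs, Sym2.mem_iff] at hz
      rcases hz with rfl | rfl
      · exact Or.inl hcz.symm
      · exact Or.inr hcz.symm
    have : (Finset.univ : Finset (Fin d)) ⊆ {c u, c v} := by
      intro x _
      rcases hsub x with h | h <;> simp [h]
    have hle := Finset.card_le_card this
    simp only [Finset.card_univ, Fintype.card_fin] at hle
    have : ({c u, c v} : Finset (Fin d)).card ≤ 2 :=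
      (Finset.card_insert_le _ _).trans (by simp)
    omega
  choose cE hcE using hec
  set cS : V ⊕ G.edgeSet → Fin d := Sum.elim c cE with hcS
  -- the coloring is proper
  have hproper : IsProperVertexColoring (subdivisionGraph G) cS := by
    intro x y hxy
    cases x with
    | inl v =>
      cases y with
      | inl w => exact absurd hxy (sub_not_adj_inl_inl G v w)
      | inr e =>
        rw [sub_adj_inl_inr] at hxy
        exact hcE e v hxy
    | inr e =>
      cases y with
      | inl v =>
        rw [sub_adj_inr_inl] at hxy
        exact fun h => hcE e v hxy h.symm
      | inr f => exact absurd hxy (sub_not_adj_inr_inr G e f)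
  -- nonempty V
  have hVne : Nonempty V := Fintype.card_pos_iff.mp (by omega)
  obtain ⟨v₀⟩ := hVne
  -- reachability in the subdivision graph
  have hreachV : ∀ u v : V, (subdivisionGraph G).Reachable (Sum.inl u) (Sum.inl v) := by
    intro u v
    obtain ⟨q⟩ := hconn.preconnected u v
    induction q with
    | nil => exact SimpleGraph.Reachable.refl _
    | @cons a b c' h' q ih =>
      have he : s(a, b) ∈ G.edgeSet := (G.mem_edgeSet).mpr h'
      have h1 : (subdivisionGraph G).Adj (Sum.inl a) (Sum.inr ⟨s(a, b), he⟩) :=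
        (sub_adj_inl_inr G a ⟨s(a, b), he⟩).mpr (Sym2.mem_mk_left a b)
      have h2 : (subdivisionGraph G).Adj (Sum.inr ⟨s(a, b), he⟩) (Sum.inl b) :=
        (sub_adj_inr_inl G b ⟨s(a, b), he⟩).mpr (Sym2.mem_mk_right a b)
      exact (h1.reachable.trans h2.reachable).trans ih
  have hreachAll : ∀ x : V ⊕ G.edgeSet, (subdivisionGraph G).Reachable (Sum.inl v₀) x := by
    intro x
    cases x with
    | inl v => exact hreachV v₀ v
    | inr e =>
      obtain ⟨u, v, hs, _⟩ := hend e
      refine (hreachV v₀ u).trans (SimpleGraph.Adj.reachable ?_)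
      rw [sub_adj_inl_inr, hs]
      exact Sym2.mem_mk_left u v
  -- the coloring is distinguishing
  have hdist : IsDistinguishingVertexColoring (subdivisionGraph G) cS := by
    intro φ hφ
    -- parity propagation
    have hprop : ∀ x y, (subdivisionGraph G).Adj x y →
        (((φ x).isLeft = x.isLeft) ↔ ((φ y).isLeft = y.isLeft)) := by
      intro x y hxy
      have h1 := sub_adj_isLeft G hxy
      have h2 := sub_adj_isLeft G (φ.map_adj_iff.mpr hxy)
      rw [h1, h2]
      cases (φ y).isLeft <;> cases y.isLeft <;> simp
    have hsame : ∀ x y, (subdivisionGraph G).Reachable x y →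
        (((φ x).isLeft = x.isLeft) ↔ ((φ y).isLeft = y.isLeft)) := by
      intro x y hr
      obtain ⟨q⟩ := hr
      induction q with
      | nil => exact Iff.rfl
      | cons h' q ih => exact (hprop _ _ h').trans ih
    by_cases hL : (φ (Sum.inl v₀)).isLeft = (Sum.inl v₀ : V ⊕ G.edgeSet).isLeft
    · -- sides preserved
      have hpres : ∀ x, (φ x).isLeft = x.isLeft := by
        intro x
        exact (hsame (Sum.inl v₀) x (hreachAll x)).mp hL
      have hV' : ∀ v : V, ∃ w, φ (Sum.inl v) = Sum.inl w := by
        intro v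
        have := hpres (Sum.inl v)
        rcases hh : φ (Sum.inl v) with z | f
        · exact ⟨z, rfl⟩
        · rw [hh] at this; simp at this
      have hE' : ∀ e : G.edgeSet, ∃ f, φ (Sum.inr e) = Sum.inr f := by
        intro e
        have := hpres (Sum.inr e)
        rcases hh : φ (Sum.inr e) with z | f
        · rw [hh] at this; simp at this
        · exact ⟨f, rfl⟩
      choose ψ hψ using hV'
      choose ρ hρ using hE'
      have hψinj : Function.Injective ψ := by
        intro a b hab
        have : φ (Sum.inl a) = φ (Sum.inl b) := by rw [hψ a, hψ b, hab]
        exact Sum.inl_injective (φ.injective this)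
      -- edge endpoints map to endpoints
      have hmem : ∀ (v : V) (e : G.edgeSet), v ∈ (e : Sym2 V) → ψ v ∈ ((ρ e : G.edgeSet) : Sym2 V) := by
        intro v e hv
        have h1 : (subdivisionGraph G).Adj (Sum.inl v) (Sum.inr e) :=
          (sub_adj_inl_inr G v e).mpr hv
        have h2 := φ.map_adj_iff.mpr h1
        rw [hψ v, hρ e] at h2
        exact (sub_adj_inl_inr G (ψ v) (ρ e)).mp h2
      have hAdjF : ∀ u v : V, G.Adj u v → G.Adj (ψ u) (ψ v) := by
        intro u v h
        have he : s(u, v) ∈ G.edgeSet := (G.mem_edgeSet).mpr h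
        set e : G.edgeSet := ⟨s(u, v), he⟩ with hee
        have h1 := hmem u e (Sym2.mem_mk_left u v)
        have h2 := hmem v e (Sym2.mem_mk_right u v)
        have hneq : ψ u ≠ ψ v := fun hq => h.ne (hψinj hq)
        have := (Sym2.mem_and_mem_iff hneq).mp ⟨h1, h2⟩
        have hmem2 := (ρ e).prop
        rw [this] at hmem2
        exact (G.mem_edgeSet).mp hmem2
      have hψbij : Function.Bijective ψ := Finite.injective_iff_bijective.mp hψinj
      have hAdjB : ∀ u v : V, G.Adj (ψ u) (ψ v) → G.Adj u v := by
        intro u v h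
        have hf : s(ψ u, ψ v) ∈ G.edgeSet := (G.mem_edgeSet).mpr h
        set f : G.edgeSet := ⟨s(ψ u, ψ v), hf⟩ with hff
        -- φ.symm (inr f) is an inr
        have hEsym : ∃ e : G.edgeSet, φ (Sum.inr e) = Sum.inr f := by
          rcases hh : φ.symm (Sum.inr f) with z | e
          · exfalso
            have : φ (Sum.inl z) = Sum.inr f := by
              rw [← hh]; exact φ.apply_symm_apply _
            rw [hψ z] at this
            exact Sum.inl_ne_inr this
          · refine ⟨e, ?_⟩
            rw [← hh]
            exact φ.apply_symm_apply _
        obtain ⟨e, hef⟩ := hEsym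
        have hρe : ρ e = f := by
          have := hρ e
          rw [hef] at this
          exact Sum.inr_injective this.symm
        obtain ⟨a, b, hab, hadjab⟩ := hend e
        have ha : ψ a ∈ ((ρ e : G.edgeSet) : Sym2 V) := hmem a e (by rw [hab]; exact Sym2.mem_mk_left a b)
        have hb : ψ b ∈ ((ρ e : G.edgeSet) : Sym2 V) := hmem b e (by rw [hab]; exact Sym2.mem_mk_right a b)
        rw [hρe] at ha hb
        have hfv : ((f : G.edgeSet) : Sym2 V) = s(ψ u, ψ v) := rfl
        rw [hfv, Sym2.mem_iff] at ha hb
        have hab' : a ≠ b := hadjab.ne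
        rcases ha with ha | ha <;> rcases hb with hb | hb
        · exact absurd (hψinj (ha.trans hb.symm)) hab'
        · have : a = u := hψinj ha
          have : b = v := hψinj hb
          subst ‹a = u›; subst ‹b = v›
          exact hadjab
        · have : a = v := hψinj ha
          have : b = u := hψinj hb
          subst ‹a = v›; subst ‹b = u›
          exact hadjab.symm
        · exact absurd (hψinj (ha.trans hb.symm)) hab'
      -- build the automorphism of G
      set Ψ : V ≃ V := Equiv.ofBijective ψ hψbij with hΨ
      have hΨapp : ∀ v, Ψ v = ψ v := fun v => rfl
      have hmapiff : ∀ {a b : V}, G.Adj (Ψ a) (Ψ b) ↔ G.Adj a b := by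
        intro a b
        constructor
        · intro h
          exact hAdjB a b (by rw [← hΨapp a, ← hΨapp b]; exact h)
        · intro h
          rw [hΨapp a, hΨapp b]
          exact hAdjF a b h
      have hcol : ∀ v, c (ψ v) = c v := by
        intro v
        have := hφ (Sum.inl v)
        rw [hψ v] at this
        simpa [hcS] using this
      have hid : ∀ v, ψ v = v := by
        intro v
        exact hc ⟨Ψ, hmapiff⟩ (fun u => hcol u) v
      intro x
      cases x with
      | inl v => rw [hψ v, hid v]
      | inr e =>
        rw [hρ e]
        congr 1
        obtain ⟨a, b, hab, hadjab⟩ := hend e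
        have ha : ψ a ∈ ((ρ e : G.edgeSet) : Sym2 V) := hmem a e (by rw [hab]; exact Sym2.mem_mk_left a b)
        have hb : ψ b ∈ ((ρ e : G.edgeSet) : Sym2 V) := hmem b e (by rw [hab]; exact Sym2.mem_mk_right a b)
        rw [hid a] at ha
        rw [hid b] at hb
        have := (Sym2.mem_and_mem_iff hadjab.ne).mp ⟨ha, hb⟩
        exact Subtype.ext (this.trans hab.symm)
    · -- sides flipped : contradiction via degree of w₀
      exfalso
      have hflip : ∀ x, ¬ ((φ x).isLeft = x.isLeft) := by
        intro x h
        exact hL ((hsame (Sum.inl v₀) x (hreachAll x)).mpr h)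
      obtain ⟨e, hx⟩ : ∃ e : G.edgeSet, φ (Sum.inl w₀) = Sum.inr e := by
        rcases hh : φ (Sum.inl w₀) with z | e
        · exact absurd (by rw [hh]; rfl : (φ (Sum.inl w₀)).isLeft = (Sum.inl w₀ : V ⊕ G.edgeSet).isLeft) (hflip (Sum.inl w₀))
        · exact ⟨e, rfl⟩
      -- cardinality of neighbor sets
      have hcb : Nat.card ((subdivisionGraph G).neighborSet (Sum.inl w₀)) = G.degree w₀ := by
        have h1 : (subdivisionGraph G).neighborSet (Sum.inl w₀) =
            Sum.inr '' {e : G.edgeSet | w₀ ∈ (e : Sym2 V)} := by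
          ext x
          cases x with
          | inl v =>
            simp only [SimpleGraph.mem_neighborSet, Set.mem_image]
            constructor
            · intro h; exact absurd h (sub_not_adj_inl_inl G w₀ v)
            · rintro ⟨e, _, he⟩; simp at he
          | inr f =>
            simp only [SimpleGraph.mem_neighborSet, Set.mem_image]
            rw [show (subdivisionGraph G).Adj (Sum.inl w₀) (Sum.inr f) ↔ w₀ ∈ (f : Sym2 V) from sub_adj_inl_inr G w₀ f]
            constructor
            · intro h; exact ⟨f, h, rfl⟩
            · rintro ⟨e, he, hef⟩
              rw [← Sum.inr_injective hef]
              exact he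
        rw [Nat.card_coe_set_eq, h1, Set.ncard_image_of_injective _ Sum.inr_injective,
          ← Nat.card_coe_set_eq]
        have e2 : {e : G.edgeSet // w₀ ∈ (e : Sym2 V)} ≃ G.neighborSet w₀ :=
          (Equiv.subtypeSubtypeEquivSubtypeInter (· ∈ G.edgeSet) (w₀ ∈ ·)).trans
            (G.incidenceSetEquivNeighborSet w₀)
        have hfin : Nat.card {e : G.edgeSet // w₀ ∈ (e : Sym2 V)} = G.degree w₀ := by
          rw [Nat.card_congr e2, Nat.card_eq_fintype_card]
          exact G.card_neighborSet_eq_degree w₀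
        exact hfin
      have hce : Nat.card ((subdivisionGraph G).neighborSet (Sum.inr e)) = 2 := by
        obtain ⟨u1, u2, hs, hadj⟩ := hend e
        have h1 : (subdivisionGraph G).neighborSet (Sum.inr e) =
            {Sum.inl u1, Sum.inl u2} := by
          ext x
          cases x with
          | inl v =>
            simp only [SimpleGraph.mem_neighborSet, Set.mem_insert_iff, Set.mem_singleton_iff]
            rw [show (subdivisionGraph G).Adj (Sum.inr e) (Sum.inl v) ↔ v ∈ (e : Sym2 V) from sub_adj_inr_inl G v e,
              hs, Sym2.mem_iff]
            constructor
            · rintro (rfl | rfl)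
              · exact Or.inl rfl
              · exact Or.inr rfl
            · rintro (h | h)
              · exact Or.inl (Sum.inl_injective h)
              · exact Or.inr (Sum.inl_injective h)
          | inr f =>
            simp only [SimpleGraph.mem_neighborSet, Set.mem_insert_iff, Set.mem_singleton_iff]
            constructor
            · intro h; exact absurd h (sub_not_adj_inr_inr G e f)
            · rintro (h | h) <;> exact absurd h (by simp)
        rw [Nat.card_coe_set_eq, h1, Set.ncard_pair (by
          intro h
          exact hadj.ne (Sum.inl_injective h))]
      have hcongr := Nat.card_congr (SimpleGraph.Iso.mapNeighborSet φ (Sum.inl w₀))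
      rw [hx, hcb, hce] at hcongr
      exact hw₀ hcongr
  -- conclude
  have hmem : d ∈ {r | ∃ c : V ⊕ G.edgeSet → Fin r,
      IsProperVertexColoring (subdivisionGraph G) c ∧
      IsDistinguishingVertexColoring (subdivisionGraph G) c} := ⟨cS, hproper, hdist⟩
  exact Nat.sInf_le hmem
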